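/- For indeterminates ξ₁,…,ξ_N and parameters p,q with p+q=1, ∑_{σ∈S_N} sgn(σ) · ∏_{i<j}(p+qξ_{σ(i)}ξ_{σ(j)}−ξ_{σ(i)}) / [(ξ_{σ(1)}−1)(ξ_{σ(1)}ξ_{σ(2)}−1)⋯(ξ_{σ(1)}ξ_{σ(2)}⋯ξ_{σ(N)}−1)] = q^{N(N−1)/2} · ∏_{i<j}(ξ_j−ξ_i) / ∏_j(ξ_j−1). -/

import Mathlib

/-!
Split the sum according to the last entry `m = σ (N - 1)`. The sign, the numerator and the
denominator all factor, so that the sum for `ξ` is a combination of the sums for `ξ` with `ξ m`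
removed, and induction on `N` reduces the theorem to the identity (with `f x y = p + q x y - x`)

  `∑ m, (-1) ^ (m + n) (ξ m - 1) ∏_{k ≠ m} f (ξ k) (ξ m) V(ξ without ξ m) = q ^ n (∏ ξ - 1) V(ξ)`

for `n + 1` variables, `V` the Vandermonde determinant. Divided by `V(ξ)`, this is Lagrange's
formula for the top coefficient of the polynomial `∏ k, f (ξ k) z` of degree `n + 1`,
interpolated at the nodes `ξ m` and `z₀ = p / q`: the node `ξ m` contributes through
`f (ξ m) (ξ m) = q (ξ m - 1) (ξ m - z₀)`, and `z₀` through `f x z₀ = q (z₀ - x)`. Lagrange needs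
distinct nodes and `q ≠ 0`; both sides being polynomial, the identity then holds everywhere
by continuity.
-/

open Finset Matrix Equiv

theorem Fin.prod_erase_univ_eq_prod_succAbove {M : Type*} [CommMonoid M] {n : ℕ}
    (g : Fin (n + 1) → M) (i : Fin (n + 1)) : ∏ j ∈ univ.erase i, g j = ∏ k, g (i.succAbove k) := by
  rw [← Fin.coe_succAboveEmb, ← prod_map univ i.succAboveEmb g]
  congr 1
  ext j
  rcases eq_or_ne j i with rfl | h
  · simp
  · simp [h, Fin.exists_succAbove_eq h]

theorem Fin.prod_Ioi_castSucc {M : Type*} [CommMonoid M] {n : ℕ} (f : Fin (n + 1) → M)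
    (i : Fin n) : ∏ j ∈ Ioi i.castSucc, f j = (∏ j ∈ Ioi i, f j.castSucc) * f (Fin.last n) := by
  rw [← Fin.coe_castSuccEmb, ← prod_map (Ioi i) Fin.castSuccEmb f, map_castSuccEmb_Ioi,
    mul_comm, ← prod_insert (by simp), Ioo_insert_right (Fin.castSucc_lt_last i)]
  rfl

theorem Fin.prod_univ_prod_Ioi_castSucc {M : Type*} [CommMonoid M] {n : ℕ}
    (g : Fin (n + 1) → Fin (n + 1) → M) :
    ∏ i, ∏ j ∈ Ioi i, g i j =
      (∏ i : Fin n, ∏ j ∈ Ioi i, g i.castSucc j.castSucc) * ∏ i : Fin n, g i.castSucc (last n) := by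
  simp [Fin.prod_univ_castSucc, Fin.prod_Ioi_castSucc, prod_mul_distrib,
    show Ioi (last n) = ∅ from Ioi_top]

open Polynomial in
theorem Polynomial.natDegree_prod_linear_le {R ι : Type*} [CommRing R] (s : Finset ι)
    (a b : ι → R) : (∏ i ∈ s, (C (a i) * X + C (b i))).natDegree ≤ #s := by
  calc _ ≤ ∑ i ∈ s, (C (a i) * X + C (b i)).natDegree := natDegree_prod_le _ _
    _ ≤ ∑ _i ∈ s, 1 := by gcongr; exact natDegree_linear_le
    _ = #s := by simp

open Polynomial in
theorem Polynomial.coeff_prod_linear {R ι : Type*} [CommRing R] (s : Finset ι) (a b : ι → R) :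
    (∏ i ∈ s, (C (a i) * X + C (b i))).coeff #s = ∏ i ∈ s, a i := by
  simpa [coeff_C] using
    coeff_prod_of_natDegree_le s _ 1 fun i _ => natDegree_linear_le (a := a i) (b := b i)

open Polynomial in
theorem Polynomial.coeff_eq_sum_eval_div_prod_succAbove {F : Type*} [Field F] {n : ℕ}
    {v : Fin (n + 1) → F} (hv : Function.Injective v) {P : F[X]} (hP : P.natDegree ≤ n) :
    P.coeff n = ∑ i, P.eval (v i) / ∏ k, (v i - v (i.succAbove k)) := by
  have hdeg : P.degree < #(univ : Finset (Fin (n + 1))) := by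
    rw [card_univ, Fintype.card_fin]
    exact (degree_le_of_natDegree_le hP).trans_lt (by exact_mod_cast n.lt_succ_self)
  simpa [Fin.prod_erase_univ_eq_prod_succAbove] using Lagrange.coeff_eq_sum hv.injOn hdeg

theorem Matrix.det_vandermonde_cons {R : Type*} [CommRing R] {n : ℕ} (a : R) (v : Fin n → R) :
    (vandermonde (Fin.cons a v : Fin (n + 1) → R)).det =
      (∏ k, (v k - a)) * (vandermonde v).det := by
  simp only [det_vandermonde, Fin.prod_univ_succ, Fin.prod_Ioi_zero, Fin.prod_Ioi_succ,
    Fin.cons_zero, Fin.cons_succ]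

theorem Matrix.det_vandermonde_eq_mul_det_vandermonde_removeNth {R : Type*} [CommRing R] {n : ℕ}
    (ξ : Fin (n + 1) → R) (m : Fin (n + 1)) :
    (vandermonde ξ).det = (-1) ^ ((m : ℕ) + n) * (∏ k, (ξ m - ξ (m.succAbove k))) *
      (vandermonde (m.removeNth ξ)).det := by
  -- moving `ξ m` to the front is the permutation `(cycleRange m)⁻¹`, of sign `(-1) ^ m`
  have hperm := det_permute (Fin.cycleRange m).symm (vandermonde ξ)
  have hcons : (vandermonde ξ).submatrix (Fin.cycleRange m).symm id =
      vandermonde (Fin.cons (ξ m) (m.removeNth ξ)) := by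
    rw [Fin.cons_removeNth_eq_comp_cycleRange_symm]
    rfl
  have hflip : ∏ k, (m.removeNth ξ k - ξ m) = (-1) ^ n * ∏ k, (ξ m - ξ (m.succAbove k)) := by
    simpa [Fin.removeNth_apply] using prod_neg (s := univ) fun k => ξ m - ξ (m.succAbove k)
  rw [hcons, det_vandermonde_cons, hflip, Perm.sign_symm, Fin.sign_cycleRange] at hperm
  push_cast at hperm
  have hsq : ((-1 : R) ^ (m : ℕ)) ^ 2 = 1 := by rw [← pow_mul, pow_mul', neg_one_sq, one_pow]
  linear_combination (-(-1 : R) ^ (m : ℕ)) * hperm - (vandermonde ξ).det * hsq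

theorem Continuous.ext_of_eq_on_injective {ι X : Type*} [Countable ι] [TopologicalSpace X]
    [T2Space X] {f g : (ι → ℂ) → X} (hf : Continuous f) (hg : Continuous g) {S : Set ℂ}
    (hS : S.Countable) (h : ∀ ξ, Function.Injective ξ → (∀ i, ξ i ∉ S) → f ξ = g ξ) :
    f = g := by
  -- move `ξ` along a line with distinct nonzero slopes: only countably many points of it are bad
  funext ξ
  obtain ⟨e, he⟩ := Countable.exists_injective_nat ι
  set w : ι → ℂ := fun i => (e i : ℂ) + 1
  have hw : Function.Injective w := fun i j hij => he (by simpa [w] using hij)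
  have hw0 i : w i ≠ 0 := Nat.cast_add_one_ne_zero (e i)
  set line : ℂ → ι → ℂ := fun z i => ξ i + z * w i
  set bad : Set ℂ := Set.range (fun p : ι × ι => (ξ p.2 - ξ p.1) / (w p.1 - w p.2)) ∪
    ⋃ i, (fun s => (s - ξ i) / w i) '' S
  have hbad : bad.Countable :=
    (Set.countable_range _).union (Set.countable_iUnion fun i => hS.image _)
  have hgood : Set.EqOn (f ∘ line) (g ∘ line) badᶜ := by
    intro z hz
    simp only [bad, Set.mem_compl_iff, Set.mem_union, Set.mem_range, Set.mem_iUnion,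
      Set.mem_image, not_or, not_exists, not_and] at hz
    refine h _ (fun i j hij => ?_) (fun i hi => hz.2 i _ hi ?_)
    · by_contra hne
      have : w i - w j ≠ 0 := sub_ne_zero.2 (hw.ne hne)
      exact hz.1 (i, j) (by field_simp; linear_combination -hij)
    · field_simp [hw0 i]
      ring
  have hline : Continuous line := continuous_pi fun i => by fun_prop
  simpa [line] using
    congrFun ((hf.comp hline).ext_on (hbad.dense_compl ℂ) (hg.comp hline) hgood) 0

/-- The factor `p + q x y - x` of the theorem, with `p = 1 - q`. -/
def pairFactor {R : Type*} [CommRing R] (q x y : R) : R := 1 - q + q * x * y - x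

section Generic

variable {F : Type*} [Field F] {n : ℕ} {q : F} {ξ : Fin (n + 1) → F}

theorem pairFactor_self (q x : F) : pairFactor q x x = (x - 1) * (q * x - (1 - q)) := by
  unfold pairFactor; ring

theorem pairFactor_of_mul_eq {q z : F} (hz : q * z = 1 - q) (x : F) :
    pairFactor q x z = q * (z - x) := by
  unfold pairFactor; linear_combination (x - 1) * hz

open Polynomial in
theorem sum_pairFactor_div_prod_sub (hq : q ≠ 0) (hξ : Function.Injective ξ)
    (hpole : ∀ m, q * ξ m ≠ 1 - q) :
    ∑ m, (ξ m - 1) * (∏ k, pairFactor q (ξ (m.succAbove k)) (ξ m)) /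
        ∏ k, (ξ m - ξ (m.succAbove k)) = q ^ n * ((∏ m, ξ m) - 1) := by
  obtain ⟨z, hz⟩ : ∃ z, q * z = 1 - q := ⟨(1 - q) / q, mul_div_cancel₀ _ hq⟩
  replace hpole m : ξ m ≠ z := fun h => hpole m (h ▸ hz)
  set P : F[X] := ∏ x, (C (q * ξ x) * X + C (1 - q - ξ x))
  have hP : ∀ y, P.eval y = ∏ x, pairFactor q (ξ x) y := fun y => by
    simp only [P, eval_prod, eval_add, eval_mul, eval_C, eval_X, pairFactor]
    exact prod_congr rfl fun _ _ => by ring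
  have hcard : #(univ : Finset (Fin (n + 1))) = n + 1 := by simp
  have hdeg : P.natDegree ≤ n + 1 := hcard ▸ natDegree_prod_linear_le univ _ _
  have hcoeff : P.coeff (n + 1) = q ^ (n + 1) * ∏ m, ξ m := by
    have := coeff_prod_linear univ (fun x => q * ξ x) fun x => 1 - q - ξ x
    rw [hcard] at this
    rw [this, prod_mul_distrib, prod_const, hcard]
  have hv : Function.Injective (Fin.cons z ξ : Fin (n + 2) → F) :=
    Fin.cons_injective_iff.2 ⟨fun ⟨m, hm⟩ => hpole m hm, hξ⟩
  have hprod : ∏ k, (z - ξ k) ≠ 0 := prod_ne_zero_iff.2 fun k _ => sub_ne_zero.2 (hpole k).symm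
  have hlag := coeff_eq_sum_eval_div_prod_succAbove hv hdeg
  rw [Fin.sum_univ_succ] at hlag
  have hnodes : ∀ m : Fin (n + 1),
      ∏ k, (ξ m - (Fin.cons z ξ : Fin (n + 2) → F) (m.succ.succAbove k)) =
        (ξ m - z) * ∏ k, (ξ m - ξ (m.succAbove k)) := fun m => by
    simp [Fin.prod_univ_succ]
  have hpole_term : P.eval z / ∏ k, (z - ξ k) = q ^ (n + 1) := by
    simp only [hP, pairFactor_of_mul_eq hz, prod_mul_distrib, prod_const, card_univ,
      Fintype.card_fin]
    field_simp
  have hnode_term : ∀ m, P.eval (ξ m) / ((ξ m - z) * ∏ k, (ξ m - ξ (m.succAbove k))) =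
      q * ((ξ m - 1) * (∏ k, pairFactor q (ξ (m.succAbove k)) (ξ m)) /
        ∏ k, (ξ m - ξ (m.succAbove k))) := fun m => by
    have : ξ m - z ≠ 0 := sub_ne_zero.2 (hpole m)
    rw [hP, Fin.prod_univ_succAbove _ m, pairFactor_self,
      show q * ξ m - (1 - q) = q * (ξ m - z) by linear_combination hz]
    field_simp
  simp only [Fin.cons_zero, Fin.succAbove_zero, Fin.cons_succ, hnodes, hpole_term, hnode_term,
    hcoeff, ← mul_sum] at hlag
  apply mul_left_cancel₀ hq
  linear_combination -hlag

theorem sum_pairFactor_mul_det_vandermonde_of_generic (hq : q ≠ 0)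
    (hξ : Function.Injective ξ) (hpole : ∀ m, q * ξ m ≠ 1 - q) :
    ∑ m : Fin (n + 1), (-1) ^ ((m : ℕ) + n) * (ξ m - 1) *
        (∏ k, pairFactor q (ξ (m.succAbove k)) (ξ m)) * (vandermonde (m.removeNth ξ)).det =
      q ^ n * ((∏ m, ξ m) - 1) * (vandermonde ξ).det := by
  rw [← sum_pairFactor_div_prod_sub hq hξ hpole, sum_mul]
  refine sum_congr rfl fun m _ => ?_
  have hD : ∏ k, (ξ m - ξ (m.succAbove k)) ≠ 0 :=
    prod_ne_zero_iff.2 fun k _ => sub_ne_zero.2 (hξ.ne (Fin.succAbove_ne m k).symm)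
  rw [det_vandermonde_eq_mul_det_vandermonde_removeNth ξ m]
  field_simp

end Generic

theorem sum_pairFactor_mul_det_vandermonde {n : ℕ} (q : ℂ) (ξ : Fin (n + 1) → ℂ) :
    ∑ m : Fin (n + 1), (-1) ^ ((m : ℕ) + n) * (ξ m - 1) *
        (∏ k, pairFactor q (ξ (m.succAbove k)) (ξ m)) * (vandermonde (m.removeNth ξ)).det =
      q ^ n * ((∏ m, ξ m) - 1) * (vandermonde ξ).det := by
  let L : ℂ × (Fin (n + 1) → ℂ) → ℂ := fun x => ∑ m : Fin (n + 1), (-1) ^ ((m : ℕ) + n) *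
    (x.2 m - 1) * (∏ k, pairFactor x.1 (x.2 (m.succAbove k)) (x.2 m)) *
      (vandermonde (m.removeNth x.2)).det
  let R : ℂ × (Fin (n + 1) → ℂ) → ℂ := fun x =>
    x.1 ^ n * ((∏ m, x.2 m) - 1) * (vandermonde x.2).det
  have hL : Continuous L := by
    simp only [L, det_vandermonde, pairFactor, Fin.removeNth_apply]; fun_prop
  have hR : Continuous R := by simp only [R, det_vandermonde]; fun_prop
  have hne_zero : ∀ q ≠ 0, ∀ ξ, L (q, ξ) = R (q, ξ) := fun q hq => congrFun <|
    (hL.comp (.prodMk_right q)).ext_of_eq_on_injective (hR.comp (.prodMk_right q))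
      (Set.countable_singleton ((1 - q) / q)) fun ξ hξ hpole =>
        sum_pairFactor_mul_det_vandermonde_of_generic hq hξ fun m h =>
          hpole m (by rw [Set.mem_singleton_iff, eq_div_iff hq, mul_comm, h])
  exact congrFun ((hL.comp (.prodMk_left ξ)).ext_on (dense_compl_singleton 0)
    (hR.comp (.prodMk_left ξ)) fun q hq => hne_zero q hq ξ) q

def permInsertLast {n : ℕ} (m : Fin (n + 1)) (σ : Perm (Fin n)) : Perm (Fin (n + 1)) :=
  (Fin.cycleRange m).symm * Perm.decomposeFin.symm (0, σ) * finRotate (n + 1)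

section permInsertLast

variable {n : ℕ} (m : Fin (n + 1)) (σ : Perm (Fin n))

@[simp]
theorem permInsertLast_last : permInsertLast m σ (Fin.last n) = m := by
  simp [permInsertLast]

@[simp]
theorem permInsertLast_castSucc (i : Fin n) :
    permInsertLast m σ i.castSucc = m.succAbove (σ i) := by
  simp [permInsertLast, Fin.coeSucc_eq_succ]

theorem sign_permInsertLast :
    Perm.sign (permInsertLast m σ) = (-1) ^ ((m : ℕ) + n) * Perm.sign σ := by
  simp [permInsertLast, Fin.sign_cycleRange, sign_finRotate, pow_add,
    mul_right_comm _ (Perm.sign σ)]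

theorem bijective_permInsertLast :
    Function.Bijective fun p : Fin (n + 1) × Perm (Fin n) => permInsertLast p.1 p.2 := by
  refine (Fintype.bijective_iff_injective_and_card _).2 ⟨fun ⟨m, σ⟩ ⟨m', σ'⟩ h => ?_, ?_⟩
  · obtain rfl : m = m' := by simpa using congr($h (Fin.last n))
    obtain rfl : σ = σ' := Equiv.ext fun i => by simpa using congr($h i.castSucc)
    rfl
  · simp [Fintype.card_perm, Nat.factorial_succ]

end permInsertLast

def tracyWidomSum {F : Type*} [Field F] {n : ℕ} (q : F) (ξ : Fin n → F) : F :=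
  ∑ σ : Perm (Fin n), ((Perm.sign σ : ℤ) : F) *
    ((∏ i, ∏ j ∈ Ioi i, pairFactor q (ξ (σ i)) (ξ (σ j))) / ∏ k, ((∏ l ∈ Iic k, ξ (σ l)) - 1))

theorem tracyWidomSum_succ {F : Type*} [Field F] {n : ℕ} (q : F) (ξ : Fin (n + 1) → F) :
    tracyWidomSum q ξ = ∑ m : Fin (n + 1), (-1) ^ ((m : ℕ) + n) *
      (∏ k, pairFactor q (ξ (m.succAbove k)) (ξ m)) / ((∏ j, ξ j) - 1) *
        tracyWidomSum q (m.removeNth ξ) := by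
  rw [tracyWidomSum, ← bijective_permInsertLast.sum_comp, Fintype.sum_prod_type]
  refine sum_congr rfl fun m _ => ?_
  rw [tracyWidomSum, mul_sum]
  refine sum_congr rfl fun σ _ => ?_
  have hnum : ∏ i, ∏ j ∈ Ioi i,
      pairFactor q (ξ (permInsertLast m σ i)) (ξ (permInsertLast m σ j)) =
        (∏ i, ∏ j ∈ Ioi i, pairFactor q (m.removeNth ξ (σ i)) (m.removeNth ξ (σ j))) *
          ∏ k, pairFactor q (ξ (m.succAbove k)) (ξ m) := by
    rw [Fin.prod_univ_prod_Ioi_castSucc]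
    simp only [permInsertLast_castSucc, permInsertLast_last, Fin.removeNth_apply]
    rw [Equiv.prod_comp σ fun k => pairFactor q (ξ (m.succAbove k)) (ξ m)]
  have hden : ∏ k, ((∏ l ∈ Iic k, ξ (permInsertLast m σ l)) - 1) =
      (∏ k, ((∏ l ∈ Iic k, m.removeNth ξ (σ l)) - 1)) * ((∏ j, ξ j) - 1) := by
    rw [Fin.prod_univ_castSucc, show Iic (Fin.last n) = univ from Iic_top,
      Equiv.prod_comp (permInsertLast m σ) ξ]
    simp only [Fin.prod_Iic_castSucc, permInsertLast_castSucc, Fin.removeNth_apply]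
  rw [hnum, hden, mul_div_mul_comm, sign_permInsertLast]
  push_cast
  ring

theorem tracyWidomSum_eq {n : ℕ} (q : ℂ) (ξ : Fin n → ℂ)
    (hξ : ∀ σ : Perm (Fin n), ∀ k, ∏ l ∈ Iic k, ξ (σ l) ≠ 1) :
    tracyWidomSum q ξ = q ^ (n * (n - 1) / 2) * (vandermonde ξ).det / ∏ j, (ξ j - 1) := by
  induction n with
  | zero => simp [tracyWidomSum]
  | succ n ih =>
    have hsub (m : Fin (n + 1)) (σ : Perm (Fin n)) (k : Fin n) :
        ∏ l ∈ Iic k, m.removeNth ξ (σ l) ≠ 1 := by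
      simpa [Fin.prod_Iic_castSucc, Fin.removeNth_apply] using hξ (permInsertLast m σ) k.castSucc
    have hone j : ξ j - 1 ≠ 0 := sub_ne_zero.2 <| by
      simpa [show Iic (0 : Fin (n + 1)) = {0} from Iic_bot] using hξ (swap 0 j) 0
    have hall : (∏ j, ξ j) - 1 ≠ 0 := sub_ne_zero.2 <| by
      simpa [show Iic (Fin.last n) = univ from Iic_top] using hξ 1 (Fin.last n)
    calc tracyWidomSum q ξ = ∑ m : Fin (n + 1),
          q ^ (n * (n - 1) / 2) / (((∏ j, ξ j) - 1) * ∏ j, (ξ j - 1)) *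
            ((-1) ^ ((m : ℕ) + n) * (ξ m - 1) * (∏ k, pairFactor q (ξ (m.succAbove k)) (ξ m)) *
              (vandermonde (m.removeNth ξ)).det) := by
          rw [tracyWidomSum_succ]
          refine sum_congr rfl fun m _ => ?_
          have hm := hone m
          have hrest : ∏ k, (ξ (m.succAbove k) - 1) ≠ 0 :=
            prod_ne_zero_iff.2 fun k _ => hone (m.succAbove k)
          rw [ih _ (hsub m), Fin.prod_univ_succAbove (fun j => ξ j - 1) m]
          simp only [Fin.removeNth_apply]
          field_simp
      _ = q ^ ((n + 1) * (n + 1 - 1) / 2) * (vandermonde ξ).det / ∏ j, (ξ j - 1) := by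
          rw [← mul_sum, sum_pairFactor_mul_det_vandermonde, Nat.triangle_succ, pow_add]
          field_simp

theorem stmt_2_general (N : ℕ) (p q : ℂ) (hpq : p + q = 1)
    (ξ : Fin N → ℂ)
    (hd : ∀ σ : Equiv.Perm (Fin N), ∀ k : Fin N, (∏ l ∈ Iic k, ξ (σ l)) ≠ 1) :
    ∑ σ : Equiv.Perm (Fin N),
      ((Equiv.Perm.sign σ : ℤ) : ℂ) *
        ((∏ i : Fin N, ∏ j ∈ Ioi i, (p + q * ξ (σ i) * ξ (σ j) - ξ (σ i))) /
          ∏ k : Fin N, ((∏ l ∈ Iic k, ξ (σ l)) - 1))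
      = q ^ (N * (N - 1) / 2) *
          (∏ i : Fin N, ∏ j ∈ Ioi i, (ξ j - ξ i)) / ∏ j, (ξ j - 1) := by
  obtain rfl : p = 1 - q := eq_sub_of_add_eq hpq
  rw [← det_vandermonde]
  exact tracyWidomSum_eq q ξ hd

theorem stmt_2 (N : ℕ) (hN : 1 ≤ N) (p q : ℂ) (hpq : p + q = 1)
    (ξ : Fin N → ℂ)
    (hd : ∀ σ : Equiv.Perm (Fin N), ∀ k : Fin N, (∏ l ∈ Iic k, ξ (σ l)) ≠ 1) :
    ∑ σ : Equiv.Perm (Fin N),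
      ((Equiv.Perm.sign σ : ℤ) : ℂ) *
        ((∏ i : Fin N, ∏ j ∈ Ioi i, (p + q * ξ (σ i) * ξ (σ j) - ξ (σ i))) /
          ∏ k : Fin N, ((∏ l ∈ Iic k, ξ (σ l)) - 1))
      = q ^ (N * (N - 1) / 2) *
          (∏ i : Fin N, ∏ j ∈ Ioi i, (ξ j - ξ i)) / ∏ j, (ξ j - 1) :=
  stmt_2_general N p q hpq ξ hd
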